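/- arXiv:2510.00756 — 3 statements merged into one kernel-verified Lean document; each statement's English description precedes it below -/
import Mathlib

section
/- Define the step operator S(x) = 4[e_2,[e_0,x]] + 2[e_2,x] - 3[e_1,[e_1,x]] on U(W_{≥-1}). Then for every n ≥ 0, S(Ω^{2n}_{2n-1,-1}) = ((2n)^2 - 9(2n) + 12) Ω^{2n+2}_{2n+1,-1}, and this scalar is nonzero in characteristic zero. -/
noncomputable section

/-- Index set `{i : ℤ | i ≥ -1}` of the basis `e_i` of the one-sided Witt algebra. -/
abbrev WIdx : Type := {i : ℤ // -1 ≤ i}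

/-- The defining relations `e_i e_j = e_j e_i + (j - i) e_{i+j}` of the universal
enveloping algebra of the one-sided Witt algebra `W_{≥ -1}`. -/
inductive wittRel (k : Type) [Field k] :
    FreeAlgebra k WIdx → FreeAlgebra k WIdx → Prop
  | rel (i j : WIdx) (h : -1 ≤ i.1 + j.1) :
      wittRel k (FreeAlgebra.ι k i * FreeAlgebra.ι k j)
        (FreeAlgebra.ι k j * FreeAlgebra.ι k i +
          (j.1 - i.1) • FreeAlgebra.ι k (⟨i.1 + j.1, h⟩ : WIdx))

/-- The universal enveloping algebra `U(W_{≥ -1})`, presented by generators `e_i` (`i ≥ -1`)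
and the relations `[e_i, e_j] = (j - i) e_{i+j}`. -/
abbrev UW (k : Type) [Field k] := RingQuot (wittRel k)

/-- The generator `e_i` of `U(W_{≥ -1})` (junk value `0` for `i < -1`). -/
def eW (k : Type) [Field k] (i : ℤ) : UW k :=
  if h : -1 ≤ i then RingQuot.mkAlgHom k (wittRel k) (FreeAlgebra.ι k ⟨i, h⟩) else 0

/-- The differentiators: `Ω^0_{k,s} = e_k e_s`, `Ω^{m+1}_{k,s} = Ω^m_{k,s} - Ω^m_{k-1,s+1}`. -/
def Ω (k : Type) [Field k] : ℕ → ℤ → ℤ → UW k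
  | 0, a, s => eW k a * eW k s
  | m + 1, a, s => Ω k m a s - Ω k m (a - 1) (s + 1)

/-- The step operator `S(x) = 4[e_2,[e_0,x]] + 2[e_2,x] - 3[e_1,[e_1,x]]` on `U(W_{≥-1})`. -/
def stepS (k : Type) [Field k] (x : UW k) : UW k :=
  (4 : ℤ) • (eW k 2 * (eW k 0 * x - x * eW k 0) - (eW k 0 * x - x * eW k 0) * eW k 2)
    + (2 : ℤ) • (eW k 2 * x - x * eW k 2)
    - (3 : ℤ) • (eW k 1 * (eW k 1 * x - x * eW k 1) - (eW k 1 * x - x * eW k 1) * eW k 1)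

/-! Each of `ad e_0`, `ad e_1`, `ad e_2` maps a differentiator `Ω^m_{a,s}` to a combination of
at most three differentiators of orders `m, m + 1, m + 2`: this follows from
`[e_p, e_a e_s] = (a - p) e_{a+p} e_s + (s - p) e_a e_{s+p}` by induction on `m` along
`Ω^{m+1}_{a,s} = Ω^m_{a,s} - Ω^m_{a-1,s+1}`. Composing these formulas, `S(Ω^{2n}_{2n-1,-1})` is a
combination of `Ω^{2n}, Ω^{2n+1}, Ω^{2n+2}` at indices `(2n+1, -1)` in which, for `s = -1`, the
coefficients of the first two cancel. -/

attribute [local instance] LieRing.ofAssociativeRing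

theorem lie_mul_right {A : Type*} [Ring A] (a x y : A) : ⁅a, x * y⁆ = ⁅a, x⁆ * y + x * ⁅a, y⁆ := by
  simp only [Ring.lie_def, mul_sub, sub_mul, mul_assoc]
  abel

section

variable {k : Type} [Field k]

theorem lie_eW_eW {i j : ℤ} (hi : -1 ≤ i) (hj : -1 ≤ j) :
    ⁅eW k i, eW k j⁆ = (j - i) • eW k (i + j) := by
  by_cases hij : -1 ≤ i + j
  · have h := RingQuot.mkAlgHom_rel k (wittRel.rel (k := k) ⟨i, hi⟩ ⟨j, hj⟩ hij)
    simp only [map_mul, map_add, map_zsmul] at h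
    rw [Ring.lie_def, eW, eW, eW, dif_pos hi, dif_pos hj, dif_pos hij, h]
    abel
  · obtain rfl : i = j := by omega
    simp

theorem lie_eW_eW_mul_eW {p a s : ℤ} (hp : -1 ≤ p) (ha : -1 ≤ a) (hs : -1 ≤ s) :
    ⁅eW k p, eW k a * eW k s⁆
      = (a - p) • (eW k (a + p) * eW k s) + (s - p) • (eW k a * eW k (s + p)) := by
  rw [lie_mul_right, lie_eW_eW hp ha, lie_eW_eW hp hs, smul_mul_assoc, mul_smul_comm,
    add_comm p a, add_comm p s]

theorem lie_eW_zero_Ω (m : ℕ) {a s : ℤ} (hs : -1 ≤ s) (ha : -1 ≤ a - m) :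
    ⁅eW k 0, Ω k m a s⁆ = (a + s) • Ω k m a s := by
  induction m generalizing a s with
  | zero =>
    rw [Ω, lie_eW_eW_mul_eW (p := 0) (by norm_num) (by omega) hs]
    simp only [add_zero, sub_zero]
    module
  | succ m ih =>
    rw [Ω, lie_sub, ih hs (by omega), ih (by omega) (by omega)]
    module

theorem lie_eW_one_Ω (m : ℕ) {a s : ℤ} (hs : -1 ≤ s) (ha : -1 ≤ a - m) :
    ⁅eW k 1, Ω k m a s⁆
      = (a + s + m - 2) • Ω k m (a + 1) s - (s + m - 1) • Ω k (m + 1) (a + 1) s := by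
  induction m generalizing a s with
  | zero =>
    rw [Ω, lie_eW_eW_mul_eW (by omega) (by omega) hs]
    simp only [Ω]
    push_cast
    ring_nf
    module
  | succ m ih =>
    rw [Ω, lie_sub, ih hs (by omega), ih (by omega) (by omega)]
    simp only [Ω]
    push_cast
    ring_nf
    module

theorem lie_eW_two_Ω (m : ℕ) {a s : ℤ} (hs : -1 ≤ s) (ha : -1 ≤ a - m) :
    ⁅eW k 2, Ω k m a s⁆
      = (a + s + 2 * m - 4) • Ω k m (a + 2) s + (s + m - 2) • Ω k (m + 2) (a + 2) s
        - (2 * s + 3 * m - 4) • Ω k (m + 1) (a + 2) s := by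
  induction m generalizing a s with
  | zero =>
    rw [Ω, lie_eW_eW_mul_eW (by omega) (by omega) hs]
    simp only [Ω]
    push_cast
    ring_nf
    module
  | succ m ih =>
    rw [Ω, lie_sub, ih hs (by omega), ih (by omega) (by omega)]
    simp only [Ω]
    push_cast
    ring_nf
    module

theorem stepS_eq (x : UW k) :
    stepS k x = (4 : ℤ) • ⁅eW k 2, ⁅eW k 0, x⁆⁆ + (2 : ℤ) • ⁅eW k 2, x⁆
      - (3 : ℤ) • ⁅eW k 1, ⁅eW k 1, x⁆⁆ := rfl

end

theorem sq_sub_nine_mul_add_twelve_ne_zero (m : ℤ) : m ^ 2 - 9 * m + 12 ≠ 0 := by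
  -- modulo 9 this reads `m ^ 2 + 3 = 0`, and `-3` is not a square modulo 9
  have hmod9 : ∀ x : ZMod 9, x ^ 2 - 9 * x + 12 ≠ 0 := by decide
  intro h
  exact hmod9 m (by exact_mod_cast congrArg (Int.cast : ℤ → ZMod 9) h)

theorem stepS_omega_general (k : Type) [Field k] (n : ℕ) :
    stepS k (Ω k (2 * n) (2 * n - 1) (-1))
        = ((2 * n : ℤ) ^ 2 - 9 * (2 * n : ℤ) + 12) • Ω k (2 * n + 2) (2 * n + 1) (-1) ∧
      ((2 * n : ℤ) ^ 2 - 9 * (2 * n : ℤ) + 12) ≠ 0 := by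
  refine ⟨?_, sq_sub_nine_mul_add_twelve_ne_zero _⟩
  have hs : (-1 : ℤ) ≤ -1 := le_rfl
  have h0 := lie_eW_zero_Ω (k := k) (2 * n) hs (a := 2 * n - 1) (by omega)
  have h1 := lie_eW_one_Ω (k := k) (2 * n) hs (a := 2 * n - 1) (by omega)
  have h2 := lie_eW_two_Ω (k := k) (2 * n) hs (a := 2 * n - 1) (by omega)
  have h1' := lie_eW_one_Ω (k := k) (2 * n) hs (a := 2 * n) (by omega)
  have h1'' := lie_eW_one_Ω (k := k) (2 * n + 1) hs (a := 2 * n) (by omega)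
  rw [stepS_eq, h0, lie_zsmul, h2, h1, lie_sub, lie_zsmul, lie_zsmul, sub_add_cancel, h1', h1'']
  push_cast
  ring_nf
  module

/-- For every `n ≥ 0`, `S(Ω^{2n}_{2n-1,-1}) = ((2n)² - 9(2n) + 12) Ω^{2n+2}_{2n+1,-1}`,
and this scalar is nonzero in characteristic zero. -/
theorem stepS_omega (k : Type) [Field k] [CharZero k] (n : ℕ) :
    stepS k (Ω k (2 * n) (2 * n - 1) (-1))
        = ((2 * n : ℤ) ^ 2 - 9 * (2 * n : ℤ) + 12) • Ω k (2 * n + 2) (2 * n + 1) (-1) ∧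
      ((2 * n : ℤ) ^ 2 - 9 * (2 * n : ℤ) + 12) ≠ 0 :=
  stepS_omega_general k n
end
end

section
/- In U(W_{≥-1}), for every n ≥ 1, Ω^{2n+1}_{2n+1,-1} = -Ω^{2n+1}_{2n,0} = (1/2) Ω^{2n+2}_{2n+1,-1}. -/
noncomputable section

/-
The relation `[e_i, e_j] = (j - i) e_{i+j}` holds for all `i, j ≥ -1` (if `i + j < -1`
both sides vanish). The reflection defect `D^m_{a,s} = Ω^m_{a,s} - (-1)^m Ω^m_{s+m,a-m}` obeys
the same recursion `D^{m+1}_{a,s} = D^m_{a,s} - D^m_{a-1,s+1}` as `Ω` itself, and the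
commutator gives `D^0_{a,s} = (s - a) e_{a+s}`. Since `a + s` is invariant under
`(a, s) ↦ (a - 1, s + 1)`, this forces `D^1 = -2 e_{a+s}` and `D^m = 0` for `m ≥ 2`. For
`m = 2n + 1`, `a = 2n`, `s = 0` this is the first identity; the second follows from it and
`Ω^{2n+2}_{2n+1,-1} = Ω^{2n+1}_{2n+1,-1} - Ω^{2n+1}_{2n,0}`.
-/

variable {k : Type} [Field k]

theorem eW_mul_eW_sub_eW_mul_eW {i j : ℤ} (hi : -1 ≤ i) (hj : -1 ≤ j) :
    eW k i * eW k j - eW k j * eW k i = (j - i) • eW k (i + j) := by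
  rcases lt_or_ge (i + j) (-1) with hij | hij
  · obtain ⟨rfl, rfl⟩ : i = -1 ∧ j = -1 := by omega
    simp
  · rw [eW, eW, eW, dif_pos hi, dif_pos hj, dif_pos hij, ← map_mul, ← map_mul,
      RingQuot.mkAlgHom_rel k (wittRel.rel ⟨i, hi⟩ ⟨j, hj⟩ hij)]
    simp

theorem Ω_succ (m : ℕ) (a s : ℤ) : Ω k (m + 1) a s = Ω k m a s - Ω k m (a - 1) (s + 1) := rfl

def reflectDefect (k : Type) [Field k] (m : ℕ) (a s : ℤ) : UW k :=
  Ω k m a s - ((-1 : ℤ) ^ m) • Ω k m (s + m) (a - m)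

theorem reflectDefect_zero {a s : ℤ} (ha : -1 ≤ a) (hs : -1 ≤ s) :
    reflectDefect k 0 a s = (s - a) • eW k (a + s) := by
  simp only [reflectDefect, Ω, pow_zero, one_smul, Nat.cast_zero, add_zero, sub_zero]
  exact eW_mul_eW_sub_eW_mul_eW ha hs

theorem reflectDefect_succ (m : ℕ) (a s : ℤ) :
    reflectDefect k (m + 1) a s = reflectDefect k m a s - reflectDefect k m (a - 1) (s + 1) := by
  have hs : s + ↑(m + 1) - 1 = s + m := by push_cast; ring
  have ha : a - ↑(m + 1) + 1 = a - m := by push_cast; ring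
  have hs' : s + ↑(m + 1) = s + 1 + m := by push_cast; ring
  have ha' : a - ↑(m + 1) = a - 1 - m := by push_cast; ring
  simp only [reflectDefect, Ω_succ, hs, ha]
  rw [hs', ha', pow_succ, mul_neg_one, neg_smul]
  module

theorem reflectDefect_one {a s : ℤ} (ha : 0 ≤ a) (hs : -1 ≤ s) :
    reflectDefect k 1 a s = (-2 : ℤ) • eW k (a + s) := by
  rw [reflectDefect_succ, reflectDefect_zero (by omega) hs,
    reflectDefect_zero (by omega) (by omega), show a - 1 + (s + 1) = a + s by ring, ← sub_smul]
  congr 1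
  ring

theorem reflectDefect_eq_zero {m : ℕ} (hm : 2 ≤ m) {a s : ℤ} (ha : m - 1 ≤ a) (hs : -1 ≤ s) :
    reflectDefect k m a s = 0 := by
  induction m, hm using Nat.le_induction generalizing a s with
  | base =>
    rw [reflectDefect_succ, reflectDefect_one (by omega) hs,
      reflectDefect_one (by omega) (by omega), show a - 1 + (s + 1) = a + s by ring, sub_self]
  | succ m hm ih =>
    push_cast at ha
    rw [reflectDefect_succ, ih (by omega) hs, ih (by omega) (by omega), sub_self]

theorem Ω_eq_neg_one_pow_smul_Ω_reflect {m : ℕ} (hm : 2 ≤ m) {a s : ℤ} (ha : m - 1 ≤ a)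
    (hs : -1 ≤ s) : Ω k m a s = ((-1 : ℤ) ^ m) • Ω k m (s + m) (a - m) :=
  sub_eq_zero.mp (reflectDefect_eq_zero hm ha hs)

/-- In `U(W_{≥-1})`, for `n ≥ 1`:
`Ω^{2n+1}_{2n+1,-1} = -Ω^{2n+1}_{2n,0} = (1/2) Ω^{2n+2}_{2n+1,-1}`. -/
theorem omega_odd_relations (k : Type) [Field k] [CharZero k] (n : ℕ) (hn : 1 ≤ n) :
    Ω k (2 * n + 1) (2 * n + 1) (-1) = - Ω k (2 * n + 1) (2 * n) 0 ∧
    Ω k (2 * n + 1) (2 * n + 1) (-1) = (2 : k)⁻¹ • Ω k (2 * n + 2) (2 * n + 1) (-1) := by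
  have hreflect := Ω_eq_neg_one_pow_smul_Ω_reflect (k := k) (m := 2 * n + 1) (by omega)
    (a := 2 * n) (s := 0) (by push_cast; omega) (by norm_num)
  rw [Odd.neg_one_pow (odd_two_mul_add_one n), neg_one_smul,
    show (0 : ℤ) + ↑(2 * n + 1) = 2 * n + 1 by push_cast; ring,
    show 2 * (n : ℤ) - ↑(2 * n + 1) = -1 by push_cast; ring] at hreflect
  have hfirst : Ω k (2 * n + 1) (2 * n + 1) (-1) = - Ω k (2 * n + 1) (2 * n) 0 := by
    rw [hreflect, neg_neg]
  have hsecond : Ω k (2 * n + 2) (2 * n + 1) (-1) = (2 : k) • Ω k (2 * n + 1) (2 * n + 1) (-1) := by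
    rw [Ω_succ (2 * n + 1), show 2 * (n : ℤ) + 1 - 1 = 2 * n by ring, neg_add_cancel,
      ← neg_eq_iff_eq_neg.mpr hfirst, sub_neg_eq_add, two_smul]
  refine ⟨hfirst, ?_⟩
  rw [hsecond, smul_smul, inv_mul_cancel₀ two_ne_zero, one_smul]
end
end

section
/- For every n ≥ 0, the target algebra T_n of the n-th orbit homomorphism is generated as a left (respectively right) B_n-module by the powers {1, t, t^2, ...}, where B_n = Ψ_n(U(W_{≥-1})). Key identity: Ψ_n(e_m)·t = t·Ψ_n(e_m) + t^{m+1} for all m ≥ -1. -/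
noncomputable section

/-- Generators of `T_n = A_1 ⊗ U(g_n)`: `t`, `∂`, and `v_0, …, v_{n-1}`. -/
inductive TGen (n : ℕ) : Type
  | t : TGen n
  | d : TGen n
  | v : Fin n → TGen n

/-- Defining relations of `T_n = A_1 ⊗ U(g_n)`: `∂t = t∂ + 1`, the `v_i` commute with
`t` and `∂`, and `[v_i, v_j] = (j-i) v_{i+j}` (with `v_m = 0` for `m ≥ n`). -/
inductive tnRel (k : Type) [Field k] (n : ℕ) :
    FreeAlgebra k (TGen n) → FreeAlgebra k (TGen n) → Prop
  | dt : tnRel k n (FreeAlgebra.ι k (TGen.d : TGen n) * FreeAlgebra.ι k (TGen.t : TGen n))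
      (FreeAlgebra.ι k (TGen.t : TGen n) * FreeAlgebra.ι k (TGen.d : TGen n) + 1)
  | tv (i : Fin n) :
      tnRel k n (FreeAlgebra.ι k (TGen.t : TGen n) * FreeAlgebra.ι k (TGen.v i))
        (FreeAlgebra.ι k (TGen.v i) * FreeAlgebra.ι k (TGen.t : TGen n))
  | dv (i : Fin n) :
      tnRel k n (FreeAlgebra.ι k (TGen.d : TGen n) * FreeAlgebra.ι k (TGen.v i))
        (FreeAlgebra.ι k (TGen.v i) * FreeAlgebra.ι k (TGen.d : TGen n))
  | vv (i j : Fin n) :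
      tnRel k n (FreeAlgebra.ι k (TGen.v i) * FreeAlgebra.ι k (TGen.v j))
        (FreeAlgebra.ι k (TGen.v j) * FreeAlgebra.ι k (TGen.v i) +
          ((j : ℤ) - (i : ℤ)) •
            (if h : i.1 + j.1 < n then FreeAlgebra.ι k (TGen.v (⟨i.1 + j.1, h⟩ : Fin n))
             else 0))

/-- The algebra `T_n = A_1 ⊗ U(g_n)`, presented by generators and relations. -/
abbrev Tn (k : Type) [Field k] (n : ℕ) := RingQuot (tnRel k n)

/-- The element `t ∈ T_n`. -/
def tT (k : Type) [Field k] (n : ℕ) : Tn k n :=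
  RingQuot.mkAlgHom k (tnRel k n) (FreeAlgebra.ι k (TGen.t : TGen n))

/-- The element `∂ ∈ T_n`. -/
def dT (k : Type) [Field k] (n : ℕ) : Tn k n :=
  RingQuot.mkAlgHom k (tnRel k n) (FreeAlgebra.ι k (TGen.d : TGen n))

/-- The element `v_j ∈ T_n`. -/
def vT (k : Type) [Field k] (n : ℕ) (j : Fin n) : Tn k n :=
  RingQuot.mkAlgHom k (tnRel k n) (FreeAlgebra.ι k (TGen.v j))

/-- The image `c_i = Ψ_n(e_i) = t^{i+1}∂ + Σ_{j=0}^{n-1} binom(i+1,j+1) t^{i-j} v_j ∈ T_n`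
of the Witt generator `e_i` under the `n`-th orbit homomorphism. -/
def cT (k : Type) [Field k] (n : ℕ) (i : ℤ) : Tn k n :=
  tT k n ^ (i + 1).toNat * dT k n +
    ∑ j : Fin n, (((i + 1).toNat.choose (j.1 + 1) : ℤ)) •
      (tT k n ^ (i - j.1).toNat * vT k n j)

/-- The image `B_n = Ψ_n(U(W_{≥-1}))`: the subalgebra of `T_n` generated by the
elements `c_i = Ψ_n(e_i)`, `i ≥ -1`. -/
def Bn (k : Type) [Field k] (n : ℕ) : Subalgebra k (Tn k n) :=
  Algebra.adjoin k {x : Tn k n | ∃ i : ℤ, -1 ≤ i ∧ x = cT k n i}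

/-! Write `B = Bn k n` and `P = k[t]`. The key identity says that `[Ψ_n(e_m), t]` is a power of
`t`, so commuting `t` past a generator of `B` only produces terms of `B·P`; hence `P·B ⊆ B·P`,
which makes `B·P` closed under multiplication, i.e. the subalgebra generated by `B` and `t`.
That subalgebra is all of `T_n`: it contains `t`, `∂ = Ψ_n(e_{-1})`, and, by induction on `j`,
`v_j = Ψ_n(e_j) - t^{j+1}∂ - Σ_{i<j} binom(j+1,i+1) t^{j-i} v_i`. The right-module statement is
the same argument in the opposite algebra. -/

open Subalgebra

namespace Subalgebra

variable {R A : Type*} [CommSemiring R] [Semiring A] [Algebra R A]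

theorem mul_mem_toSubmodule_mul {S T : Subalgebra R A} {x y : A} (hx : x ∈ S) (hy : y ∈ T) :
    x * y ∈ toSubmodule S * toSubmodule T :=
  Submodule.mul_mem_mul hx hy

theorem mul_toSubmodule_of_le {S T : Subalgebra R A}
    (h : toSubmodule T * toSubmodule S ≤ toSubmodule S * toSubmodule T) :
    toSubmodule S * toSubmodule T = toSubmodule (S ⊔ T) := by
  refine le_antisymm (mul_toSubmodule_le _ _) ?_
  rintro x (hx : x ∈ Algebra.adjoin R (S ∪ T : Set A))
  induction hx using Algebra.adjoin_induction with
  | mem x hx =>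
    rcases hx with hxS | hxT
    · simpa using mul_mem_toSubmodule_mul hxS (one_mem T)
    · simpa using mul_mem_toSubmodule_mul (one_mem S) hxT
  | algebraMap r => simpa using mul_mem_toSubmodule_mul (one_mem S) (algebraMap_mem T r)
  | add x y _ _ hx hy => exact add_mem hx hy
  | mul x y _ _ hx hy =>
    refine (?_ : _ ≤ toSubmodule S * toSubmodule T) (Submodule.mul_mem_mul hx hy)
    calc toSubmodule S * toSubmodule T * (toSubmodule S * toSubmodule T)
        = toSubmodule S * (toSubmodule T * toSubmodule S) * toSubmodule T := by
          simp only [mul_assoc]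
      _ ≤ toSubmodule S * (toSubmodule S * toSubmodule T) * toSubmodule T := by gcongr
      _ = toSubmodule S * toSubmodule T := by
          rw [← mul_assoc, (isIdempotentElem_toSubmodule S).eq, mul_assoc,
            (isIdempotentElem_toSubmodule T).eq]

theorem toSubmodule_op (S : Subalgebra R A) :
    toSubmodule S.op =
      (toSubmodule S).map ((MulOpposite.opLinearEquiv R : A ≃ₗ[R] Aᵐᵒᵖ) : A →ₗ[R] Aᵐᵒᵖ) := by
  ext x
  simp [Submodule.mem_map_equiv]

end Subalgebra

namespace Algebra

variable {R A : Type*} [CommRing R] [Ring A] [Algebra R A] {s : Set A} {t : A}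

theorem pow_mul_mem_adjoin_mul_adjoin_singleton {c : A} (hc : c ∈ adjoin R s)
    (hct : c * t - t * c ∈ adjoin R {t}) (m : ℕ) :
    t ^ m * c ∈ toSubmodule (adjoin R s) * toSubmodule (adjoin R {t}) := by
  have ht : ∀ m : ℕ, t ^ m ∈ adjoin R {t} := fun m => pow_mem (self_mem_adjoin_singleton R t) m
  induction m with
  | zero => simpa using mul_mem_toSubmodule_mul hc (ht 0)
  | succ m ih =>
    have hmul : t ^ m * c * t ∈ toSubmodule (adjoin R s) * toSubmodule (adjoin R {t}) := by
      have := Submodule.mul_mem_mul ih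
        ((adjoin R {t}).mem_toSubmodule.2 (self_mem_adjoin_singleton R t))
      rwa [mul_assoc, (isIdempotentElem_toSubmodule _).eq] at this
    have hcomm :
        t ^ m * (c * t - t * c) ∈ toSubmodule (adjoin R s) * toSubmodule (adjoin R {t}) := by
      simpa using mul_mem_toSubmodule_mul (one_mem (adjoin R s)) (mul_mem (ht m) hct)
    convert sub_mem hmul hcomm using 1
    noncomm_ring

theorem adjoin_singleton_mul_adjoin_le (hcomm : ∀ c ∈ s, c * t - t * c ∈ adjoin R {t}) :
    toSubmodule (adjoin R {t}) * toSubmodule (adjoin R s) ≤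
      toSubmodule (adjoin R s) * toSubmodule (adjoin R {t}) := by
  set S := toSubmodule (adjoin R s)
  set T := toSubmodule (adjoin R {t}) with hT
  suffices h : ∀ b ∈ adjoin R s, T * (R ∙ b) ≤ S * T by
    refine Submodule.mul_le.2 fun q hq b hb => h b hb ?_
    simpa using Submodule.mul_mem_mul hq (Submodule.mem_span_singleton_self b)
  intro b hb
  induction hb using adjoin_induction with
  | mem c hc =>
    refine Submodule.mul_le.2 fun q hq x hx => ?_
    obtain ⟨r, rfl⟩ := Submodule.mem_span_singleton.1 hx
    rw [mul_smul_comm]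
    refine Submodule.smul_mem _ r ?_
    rw [hT, adjoin_eq_span, Submonoid.closure_singleton_eq] at hq
    induction hq using Submodule.span_induction with
    | mem q hq =>
      obtain ⟨m, rfl⟩ := hq
      exact pow_mul_mem_adjoin_mul_adjoin_singleton (subset_adjoin hc) (hcomm c hc) m
    | zero => simp
    | add x y _ _ hx hy => rw [add_mul]; exact add_mem hx hy
    | smul r x _ hx => rw [smul_mul_assoc]; exact Submodule.smul_mem _ r hx
  | algebraMap r =>
    calc T * (R ∙ algebraMap R A r) ≤ T * T := by
          gcongr
          exact Submodule.span_le.2 (Set.singleton_subset_iff.2 ((adjoin R {t}).algebraMap_mem r))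
      _ = T := (isIdempotentElem_toSubmodule _).eq
      _ ≤ S * T :=
        le_mul_of_one_le_left' (Submodule.one_le.2 ((adjoin R s).mem_toSubmodule.2 (one_mem _)))
  | add x y _ _ hx hy =>
    calc T * (R ∙ (x + y)) ≤ T * ((R ∙ x) ⊔ (R ∙ y)) := by
          gcongr
          exact Submodule.span_le.2 (Set.singleton_subset_iff.2 (add_mem
            (Submodule.mem_sup_left (Submodule.mem_span_singleton_self x))
            (Submodule.mem_sup_right (Submodule.mem_span_singleton_self y))))
      _ ≤ S * T := by rw [Submodule.mul_sup]; exact sup_le hx hy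
  | mul x y _ _ hx hy =>
    calc T * (R ∙ (x * y)) ≤ T * (R ∙ x) * (R ∙ y) := by
          rw [mul_assoc, Submodule.span_mul_span, Set.singleton_mul_singleton]
      _ ≤ S * T * (R ∙ y) := by gcongr
      _ = S * (T * (R ∙ y)) := mul_assoc _ _ _
      _ ≤ S * (S * T) := by gcongr
      _ = S * T := by rw [← mul_assoc, (isIdempotentElem_toSubmodule _).eq]

theorem adjoin_mul_adjoin_singleton_eq (hcomm : ∀ c ∈ s, c * t - t * c ∈ adjoin R {t}) :
    toSubmodule (adjoin R s) * toSubmodule (adjoin R {t}) =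
      toSubmodule (adjoin R (insert t s)) := by
  rw [mul_toSubmodule_of_le (adjoin_singleton_mul_adjoin_le hcomm), Set.insert_eq, adjoin_union,
    sup_comm]

theorem adjoin_singleton_mul_adjoin_eq (hcomm : ∀ c ∈ s, c * t - t * c ∈ adjoin R {t}) :
    toSubmodule (adjoin R {t}) * toSubmodule (adjoin R s) =
      toSubmodule (adjoin R (insert t s)) := by
  have hsing : MulOpposite.unop ⁻¹' {t} = {MulOpposite.op t} := by
    ext x
    exact ⟨fun h => h ▸ (MulOpposite.op_unop x).symm, fun h => h ▸ MulOpposite.unop_op t⟩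
  have hcomm_op : ∀ c ∈ MulOpposite.unop ⁻¹' s,
      c * MulOpposite.op t - MulOpposite.op t * c ∈ adjoin R {MulOpposite.op t} := by
    intro c hc
    rw [← hsing, ← Subalgebra.op_adjoin, Subalgebra.mem_op]
    simpa using neg_mem (hcomm c.unop hc)
  have h := adjoin_mul_adjoin_singleton_eq hcomm_op
  rw [Set.insert_eq, ← hsing, ← Set.preimage_union, ← Set.insert_eq, ← Subalgebra.op_adjoin,
    ← Subalgebra.op_adjoin, ← Subalgebra.op_adjoin, toSubmodule_op, toSubmodule_op,
    toSubmodule_op, ← Submodule.map_op_mul] at h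
  exact Submodule.map_injective_of_injective (MulOpposite.opLinearEquiv R).injective h

theorem span_mul_pow_eq (B : Subalgebra R A) (t : A) :
    Submodule.span R {z | ∃ b ∈ B, ∃ m : ℕ, z = b * t ^ m} =
      toSubmodule B * toSubmodule (adjoin R {t}) := by
  rw [adjoin_eq_span, Submonoid.closure_singleton_eq, ← (toSubmodule B).span_eq,
    Submodule.span_mul_span]
  congr 1
  ext z
  constructor
  · rintro ⟨b, hb, m, rfl⟩
    exact Set.mul_mem_mul hb ⟨m, rfl⟩
  · rintro ⟨b, hb, _, ⟨m, rfl⟩, rfl⟩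
    exact ⟨b, hb, m, rfl⟩

theorem span_pow_mul_eq (B : Subalgebra R A) (t : A) :
    Submodule.span R {z | ∃ b ∈ B, ∃ m : ℕ, z = t ^ m * b} =
      toSubmodule (adjoin R {t}) * toSubmodule B := by
  rw [adjoin_eq_span, Submonoid.closure_singleton_eq, ← (toSubmodule B).span_eq,
    Submodule.span_mul_span]
  congr 1
  ext z
  constructor
  · rintro ⟨b, hb, m, rfl⟩
    exact Set.mul_mem_mul ⟨m, rfl⟩ hb
  · rintro ⟨_, ⟨m, rfl⟩, b, hb, rfl⟩
    exact ⟨b, hb, m, rfl⟩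

end Algebra

section

variable {k : Type} [Field k] {n : ℕ}

theorem dT_mul_tT : dT k n * tT k n = tT k n * dT k n + 1 := by
  simpa only [dT, tT, map_mul, map_add, map_one] using RingQuot.mkAlgHom_rel k (tnRel.dt (n := n))

theorem commute_tT_vT (j : Fin n) : Commute (tT k n) (vT k n j) := by
  have h := RingQuot.mkAlgHom_rel k (tnRel.tv (k := k) j)
  rwa [map_mul, map_mul] at h

theorem cT_mul_tT (m : ℤ) :
    cT k n m * tT k n = tT k n * cT k n m + tT k n ^ (m + 1).toNat := by
  have hsum : Commute (tT k n) (∑ j : Fin n, ((m + 1).toNat.choose (j.1 + 1) : ℤ) •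
      (tT k n ^ (m - j.1).toNat * vT k n j)) :=
    .sum_right _ _ _ fun j _ =>
      (((Commute.refl _).pow_right _).mul_right (commute_tT_vT j)).smul_right _
  rw [cT, add_mul, mul_add, hsum.eq, mul_assoc, dT_mul_tT, mul_add, mul_one, ← mul_assoc,
    pow_mul_comm', mul_assoc]
  abel

theorem cT_neg_one : cT k n (-1) = dT k n := by
  simp [cT]

theorem vT_mem_adjoin_insert_tT (j : Fin n) :
    vT k n j ∈ Algebra.adjoin k (insert (tT k n) {x | ∃ i : ℤ, -1 ≤ i ∧ x = cT k n i}) := by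
  set C := Algebra.adjoin k (insert (tT k n) {x | ∃ i : ℤ, -1 ≤ i ∧ x = cT k n i})
  have ht : tT k n ∈ C := Algebra.subset_adjoin (Set.mem_insert _ _)
  have hc : ∀ i : ℤ, -1 ≤ i → cT k n i ∈ C := fun i hi =>
    Algebra.subset_adjoin (Set.mem_insert_of_mem _ ⟨i, hi, rfl⟩)
  have hd : dT k n ∈ C := cT_neg_one (k := k) (n := n) ▸ hc (-1) le_rfl
  obtain ⟨j, hj⟩ := j
  induction j using Nat.strong_induction_on with
  | _ j ih =>
    set rest := ∑ i ∈ Finset.univ.erase ⟨j, hj⟩, (((j + 1).choose (i.1 + 1) : ℕ) : ℤ) •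
      (tT k n ^ ((j : ℤ) - i.1).toNat * vT k n i)
    have hsplit : cT k n j = tT k n ^ (j + 1) * dT k n + (vT k n ⟨j, hj⟩ + rest) := by
      rw [cT, ← Finset.add_sum_erase _ _ (Finset.mem_univ ⟨j, hj⟩)]
      simp [rest]
    have hrest : rest ∈ C := by
      refine Subalgebra.sum_mem _ fun i hi => ?_
      have hne : i.1 ≠ j := fun h => Finset.ne_of_mem_erase hi (Fin.ext h)
      rcases hne.lt_or_gt with hij | hji
      · exact Subalgebra.zsmul_mem _ (mul_mem (pow_mem ht _) (ih i.1 hij i.2)) _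
      · rw [Nat.choose_eq_zero_of_lt (by omega), Nat.cast_zero, zero_zsmul]
        exact zero_mem C
    have := sub_mem (sub_mem (hc j (by omega)) (mul_mem (pow_mem ht (j + 1)) hd)) hrest
    rwa [hsplit, add_sub_cancel_left, add_sub_cancel_right] at this

theorem adjoin_insert_tT_eq_top :
    Algebra.adjoin k (insert (tT k n) {x | ∃ i : ℤ, -1 ≤ i ∧ x = cT k n i}) = ⊤ := by
  have hgen :
      Algebra.adjoin k (Set.range (RingQuot.mkAlgHom k (tnRel k n) ∘ FreeAlgebra.ι k)) = ⊤ := by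
    rw [Set.range_comp, ← AlgHom.map_adjoin, FreeAlgebra.adjoin_range_ι, Algebra.map_top,
      AlgHom.range_eq_top]
    exact RingQuot.mkAlgHom_surjective k _
  rw [eq_top_iff, ← hgen, Algebra.adjoin_le_iff]
  rintro _ ⟨g, rfl⟩
  cases g with
  | t => exact Algebra.subset_adjoin (Set.mem_insert _ _)
  | d => exact Algebra.subset_adjoin (Set.mem_insert_of_mem _ ⟨-1, le_rfl, cT_neg_one.symm⟩)
  | v j => exact vT_mem_adjoin_insert_tT j

end

theorem Tn_generated_by_powers_of_t_general (k : Type) [Field k] (n : ℕ) :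
    (∀ m : ℤ, -1 ≤ m → cT k n m * tT k n = tT k n * cT k n m + tT k n ^ (m + 1).toNat) ∧
    Submodule.span k {z : Tn k n | ∃ b ∈ Bn k n, ∃ m : ℕ, z = b * tT k n ^ m} = ⊤ ∧
    Submodule.span k {z : Tn k n | ∃ b ∈ Bn k n, ∃ m : ℕ, z = tT k n ^ m * b} = ⊤ := by
  have hcomm : ∀ c ∈ {x | ∃ i : ℤ, -1 ≤ i ∧ x = cT k n i},
      c * tT k n - tT k n * c ∈ Algebra.adjoin k {tT k n} := by
    rintro _ ⟨i, -, rfl⟩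
    rw [cT_mul_tT, add_sub_cancel_left]
    exact pow_mem (Algebra.self_mem_adjoin_singleton k _) _
  refine ⟨fun m _ => cT_mul_tT m, ?_, ?_⟩
  · rw [Algebra.span_mul_pow_eq, Bn, Algebra.adjoin_mul_adjoin_singleton_eq hcomm,
      adjoin_insert_tT_eq_top, Algebra.top_toSubmodule]
  · rw [Algebra.span_pow_mul_eq, Bn, Algebra.adjoin_singleton_mul_adjoin_eq hcomm,
      adjoin_insert_tT_eq_top, Algebra.top_toSubmodule]

/-- For every `n ≥ 0`: the key identity `Ψ_n(e_m)·t = t·Ψ_n(e_m) + t^{m+1}` holds, and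
`T_n` is generated as a left (resp. right) `B_n`-module by `{1, t, t², …}`. -/
theorem Tn_generated_by_powers_of_t (k : Type) [Field k] [CharZero k] (n : ℕ) :
    (∀ m : ℤ, -1 ≤ m → cT k n m * tT k n = tT k n * cT k n m + tT k n ^ (m + 1).toNat) ∧
    Submodule.span k {z : Tn k n | ∃ b ∈ Bn k n, ∃ m : ℕ, z = b * tT k n ^ m} = ⊤ ∧
    Submodule.span k {z : Tn k n | ∃ b ∈ Bn k n, ∃ m : ℕ, z = tT k n ^ m * b} = ⊤ :=
  Tn_generated_by_powers_of_t_general k n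
end
end
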